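/- Fix μ_max > 0. There exists a constant C > 0 such that for every μ ∈ [0, μ_max], every α ≥ 0, and every u ∈ H^{α+2}(ℝ), one has ‖(F_μ − 1)u‖_{H^α} ≤ C μ ‖u‖_{H^{α+2}}. -/

import Mathlib

/-!
For `t = √μ |ξ| > 0` the elementary bounds `t - t³ ≤ tanh t ≤ t` put `F_μ(ξ)² = tanh t / t` in
`[1 - μξ², 1]`, hence `|F_μ(ξ) - 1| ≤ μξ² ≤ μ(1 + ξ²)`, and the estimate holds with `C = 1` once
`(F_μ - 1)u` is known to have Fourier transform `(F_μ - 1)û`. For this, Fourier inversion is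
applied to `F_μ û`: it is integrable because the `H^{α+2}` norm controls `‖û‖_{L¹}`
(Cauchy–Schwarz against `(1 + ξ²)^{-(α+2)/2} ∈ L²`), and its inverse transform is real-valued
because `F_μ` is even and `û(-ξ) = conj (û ξ)`.
-/
open MeasureTheory Real
open scoped ENNReal

/-- Fourier transform of a real-valued function on ℝ (as a complex-valued function). -/
noncomputable def fourierC (u : ℝ → ℝ) : ℝ → ℂ :=
  (FourierTransform.fourier (fun x : ℝ => (u x : ℂ)) : ℝ → ℂ)

/-- Fourier multiplier with (real) symbol `G`, acting on real-valued functions. -/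
noncomputable def fourierMul (G : ℝ → ℝ) (u : ℝ → ℝ) : ℝ → ℝ :=
  fun x => ((FourierTransformInv.fourierInv (fun ξ : ℝ => (G ξ : ℂ) * fourierC u ξ) : ℝ → ℂ) x).re

/-- The `H^α(ℝ)` Sobolev norm, `‖(1+ξ²)^{α/2} û‖_{L²}`. -/
noncomputable def HNorm (α : ℝ) (u : ℝ → ℝ) : ℝ≥0∞ :=
  eLpNorm (fun ξ : ℝ => (1 + ξ ^ 2) ^ (α / 2) * ‖fourierC u ξ‖) 2 volume

/-- The symbol `F_μ(ξ) = sqrt(tanh(√μ|ξ|)/(√μ|ξ|))`. -/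
noncomputable def Fsymb (μ : ℝ) (ξ : ℝ) : ℝ :=
  if μ = 0 ∨ ξ = 0 then 1 else Real.sqrt (Real.tanh (Real.sqrt μ * |ξ|) / (Real.sqrt μ * |ξ|))

/-- The symbol of `F_μ⁻¹`. -/
noncomputable def FsymbInv (μ : ℝ) (ξ : ℝ) : ℝ :=
  if μ = 0 ∨ ξ = 0 then 1 else Real.sqrt ((Real.sqrt μ * |ξ|) / Real.tanh (Real.sqrt μ * |ξ|))

/-- Time derivative of a time-dependent function. -/
noncomputable def tderiv (u : ℝ → ℝ → ℝ) (t x : ℝ) : ℝ :=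
  deriv (fun τ => u τ x) t

/-- The `W^{α,1}(ℝ)` norm for integer `α`. -/
noncomputable def WNorm (α : ℕ) (u : ℝ → ℝ) : ℝ≥0∞ :=
  ∑ k ∈ Finset.range (α + 1), eLpNorm (iteratedDeriv k u) 1 volume

/-- Membership in `W^{α,1}(ℝ)` (with a smooth-representative convention). -/
def MemW (α : ℕ) (u : ℝ → ℝ) : Prop :=
  ContDiff ℝ (α : ℕ∞) u ∧ ∀ k ≤ α, MeasureTheory.Integrable (iteratedDeriv k u)

/-- The antiderivative operator `∂⁻¹u(x) = (1/2)∫ sgn(x−y)u(y)dy`. -/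
noncomputable def pinv (u : ℝ → ℝ) : ℝ → ℝ :=
  fun x => (1 / 2) * ∫ y, Real.sign (x - y) * u y

open scoped FourierTransform ComplexConjugate

namespace Real

theorem continuous_tanh : Continuous tanh := by
  simp_rw [funext tanh_eq_sinh_div_cosh]
  exact continuous_sinh.div continuous_cosh fun x => (cosh_pos x).ne'

theorem sinh_le_mul_cosh {x : ℝ} (hx : 0 ≤ x) : sinh x ≤ x * cosh x := by
  have hmono : MonotoneOn (fun t => t * cosh t - sinh t) (Set.Ici 0) := by
    refine monotoneOn_of_hasDerivWithinAt_nonneg (convex_Ici 0) (by fun_prop)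
      (fun t _ => (((hasDerivAt_id' t).mul (hasDerivAt_cosh t)).sub
        (hasDerivAt_sinh t)).hasDerivWithinAt) fun t ht => ?_
    rw [interior_Ici, Set.mem_Ioi] at ht
    have := sinh_pos_iff.2 ht
    nlinarith
  simpa using hmono Set.self_mem_Ici hx hx

theorem tanh_le_self {x : ℝ} (hx : 0 ≤ x) : tanh x ≤ x := by
  rw [tanh_eq_sinh_div_cosh, div_le_iff₀ (cosh_pos x)]
  exact sinh_le_mul_cosh hx

theorem self_sub_pow_three_le_tanh {x : ℝ} (hx : 0 ≤ x) : x - x ^ 3 ≤ tanh x := by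
  rw [tanh_eq_sinh_div_cosh, le_div_iff₀ (cosh_pos x)]
  have hmono : MonotoneOn (fun t => sinh t - (t - t ^ 3) * cosh t) (Set.Ici 0) := by
    refine monotoneOn_of_hasDerivWithinAt_nonneg (convex_Ici 0) (by fun_prop)
      (fun t _ => ((hasDerivAt_sinh t).sub (((hasDerivAt_id' t).sub (hasDerivAt_pow 3 t)).mul
        (hasDerivAt_cosh t))).hasDerivWithinAt) fun t ht => ?_
    rw [interior_Ici, Set.mem_Ioi] at ht
    have h1 := sinh_le_mul_cosh ht.le
    have h2 := sinh_pos_iff.2 ht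
    have h3 := cosh_pos t
    norm_num only [Pi.sub_apply]
    nlinarith [mul_le_mul_of_nonneg_left h1 ht.le, mul_pos (pow_pos ht 3) h2,
      mul_pos (pow_pos ht 2) h3]
  simpa using hmono Set.self_mem_Ici hx hx

end Real

lemma Fsymb_nonneg (μ ξ : ℝ) : 0 ≤ Fsymb μ ξ := by
  unfold Fsymb
  split_ifs
  exacts [zero_le_one, sqrt_nonneg _]

lemma Fsymb_le_one (μ ξ : ℝ) : Fsymb μ ξ ≤ 1 := by
  unfold Fsymb
  split_ifs
  · exact le_rfl
  · have ht : 0 ≤ √μ * |ξ| := by positivity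
    exact sqrt_le_one.2 (div_le_one_of_le₀ (tanh_le_self ht) ht)

lemma abs_Fsymb_le_one (μ ξ : ℝ) : |Fsymb μ ξ| ≤ 1 :=
  abs_le.2 ⟨by linarith [Fsymb_nonneg μ ξ], Fsymb_le_one μ ξ⟩

lemma Fsymb_neg (μ ξ : ℝ) : Fsymb μ (-ξ) = Fsymb μ ξ := by
  simp [Fsymb]

lemma abs_Fsymb_sub_one_le {μ : ℝ} (hμ : 0 ≤ μ) (ξ : ℝ) : |Fsymb μ ξ - 1| ≤ μ * ξ ^ 2 := by
  rw [abs_sub_comm, abs_of_nonneg (sub_nonneg.2 (Fsymb_le_one μ ξ))]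
  unfold Fsymb
  split_ifs with h
  · rw [sub_self]
    positivity
  · obtain ⟨hμ0, hξ0⟩ := not_or.1 h
    set t := √μ * |ξ|
    have ht : 0 < t := mul_pos (sqrt_pos.2 (hμ.lt_of_ne' hμ0)) (abs_pos.2 hξ0)
    have ht2 : t ^ 2 = μ * ξ ^ 2 := by rw [mul_pow, sq_sqrt hμ, sq_abs]
    have hr : 1 - t ^ 2 ≤ tanh t / t := by
      rw [le_div_iff₀ ht]; linarith [self_sub_pow_three_le_tanh ht.le]
    have hr1 : tanh t / t ≤ 1 := div_le_one_of_le₀ (tanh_le_self ht.le) ht.le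
    have hsqrt : tanh t / t ≤ √(tanh t / t) := by
      rcases le_or_gt (tanh t / t) 0 with hneg | hpos
      · exact hneg.trans (sqrt_nonneg _)
      · exact le_sqrt_of_sq_le (by nlinarith)
    linarith

lemma continuous_Fsymb {μ : ℝ} (hμ : 0 ≤ μ) : Continuous (Fsymb μ) := by
  rw [continuous_iff_continuousAt]
  intro ξ₀
  rcases eq_or_ne ξ₀ 0 with rfl | hξ₀
  · have hF0 : Fsymb μ 0 = 1 := by simp [Fsymb]
    rw [ContinuousAt, hF0, tendsto_iff_norm_sub_tendsto_zero]
    refine squeeze_zero (fun _ => norm_nonneg _) (fun ξ => abs_Fsymb_sub_one_le hμ ξ) ?_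
    simpa using ((continuous_pow 2).const_mul μ).tendsto 0
  rcases hμ.eq_or_lt with rfl | hμ
  · have hF : Fsymb 0 = fun _ => 1 := funext fun ξ => by simp [Fsymb]
    rw [hF]
    exact continuousAt_const
  have hFsymb : (fun ξ => √(tanh (√μ * |ξ|) / (√μ * |ξ|))) =ᶠ[nhds ξ₀] Fsymb μ := by
    filter_upwards [eventually_ne_nhds hξ₀] with ξ hξ
    simp [Fsymb, hξ, hμ.ne']
  refine ContinuousAt.congr ?_ hFsymb
  refine (continuous_tanh.comp (continuous_const.mul continuous_abs)).continuousAt.div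
    (by fun_prop) ?_ |>.sqrt
  exact (mul_pos (sqrt_pos.2 hμ) (abs_pos.2 hξ₀)).ne'

lemma fourierC_of_not_integrable {f : ℝ → ℝ} (hf : ¬ Integrable f) : fourierC f = 0 := by
  funext ξ
  refine integral_undef fun hI => hf ?_
  simpa using ((Real.fourierIntegral_convergent_iff ξ).1 hI).re

lemma continuous_fourierC (f : ℝ → ℝ) : Continuous (fourierC f) := by
  by_cases hf : Integrable f
  · exact VectorFourier.fourierIntegral_continuous Real.continuous_fourierChar
      continuous_inner hf.ofReal
  · rw [fourierC_of_not_integrable hf]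
    exact continuous_const

lemma fourierC_sub {f g : ℝ → ℝ} (hf : Integrable f) (hg : Integrable g) :
    fourierC (fun x => f x - g x) = fourierC f - fourierC g := by
  funext ξ
  simp only [fourierC, Real.fourier_eq, Pi.sub_apply, Complex.ofReal_sub, smul_sub]
  exact integral_sub ((Real.fourierIntegral_convergent_iff ξ).2 hf.ofReal)
    ((Real.fourierIntegral_convergent_iff ξ).2 hg.ofReal)

lemma conj_fourier (f : ℝ → ℂ) (ξ : ℝ) :
    conj (𝓕 f ξ) = 𝓕 (fun x => conj (f x)) (-ξ) := by
  rw [Real.fourier_real_eq_integral_exp_smul, Real.fourier_real_eq_integral_exp_smul,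
    ← integral_conj]
  congr 1 with x
  simp only [smul_eq_mul, map_mul, ← Complex.exp_conj, Complex.conj_I, Complex.conj_ofReal]
  congr 2
  push_cast
  ring

lemma conj_fourierC (u : ℝ → ℝ) (ξ : ℝ) : conj (fourierC u ξ) = fourierC u (-ξ) := by
  simp only [fourierC, conj_fourier, Complex.conj_ofReal]

lemma conj_fourierInv {g : ℝ → ℂ} (hg : ∀ ξ, conj (g ξ) = g (-ξ)) (x : ℝ) :
    conj (𝓕⁻ g x) = 𝓕⁻ g x := by
  rw [Real.fourierInv_eq_fourier_neg, conj_fourier, neg_neg, funext hg,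
    ← Real.fourierInv_eq_fourier_comp_neg, Real.fourierInv_eq_fourier_neg]

section FourierMultiplier

variable {G : ℝ → ℝ} {C : ℝ} {u : ℝ → ℝ}

lemma fourierC_fourierMul (hGc : Continuous G) (hGb : ∀ ξ, |G ξ| ≤ C)
    (hG_neg : ∀ ξ, G (-ξ) = G ξ) (hu : Integrable (fourierC u))
    (hv : Integrable (fourierMul G u)) :
    fourierC (fourierMul G u) = fun ξ => G ξ * fourierC u ξ := by
  set g : ℝ → ℂ := fun ξ => G ξ * fourierC u ξ
  have hg_int : Integrable g :=
    hu.bdd_mul (c := C) (Complex.continuous_ofReal.comp hGc).aestronglyMeasurable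
      (.of_forall fun ξ => by simpa using hGb ξ)
  have hg_conj (ξ : ℝ) : conj (g ξ) = g (-ξ) := by
    simp [g, conj_fourierC, hG_neg]
  have hw : (fun x => (fourierMul G u x : ℂ)) = 𝓕⁻ g :=
    funext fun x => Complex.conj_eq_iff_re.1 (conj_fourierInv hg_conj x)
  have hFg_int : Integrable (𝓕 g) := by
    have := (hw ▸ hv.ofReal : Integrable (𝓕⁻ g)).comp_neg
    simpa [Real.fourierInv_eq_fourier_neg] using this
  change 𝓕 (fun x => (fourierMul G u x : ℂ)) = g
  rw [hw]
  exact (Complex.continuous_ofReal.comp hGc |>.mul (continuous_fourierC u)).fourier_fourierInv_eq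
    hg_int hFg_int

/-- Where `fourierMul G u - u` is not integrable, its `fourierC` is `0` by convention, so the
bound holds there trivially. -/
lemma norm_fourierC_fourierMul_sub_le (hGc : Continuous G) (hGb : ∀ ξ, |G ξ| ≤ C)
    (hG_neg : ∀ ξ, G (-ξ) = G ξ) (hu : Integrable (fourierC u)) (ξ : ℝ) :
    ‖fourierC (fun x => fourierMul G u x - u x) ξ‖ ≤ |G ξ - 1| * ‖fourierC u ξ‖ := by
  by_cases hd : Integrable (fun x => fourierMul G u x - u x)
  · have hu1 : Integrable u := by
      by_contra hu1
      have hzero : fourierMul G u = 0 := by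
        funext x
        simp [fourierMul, fourierC_of_not_integrable hu1, Real.fourierInv_eq]
      exact hu1 (by simpa [hzero] using hd.neg)
    have hv : Integrable (fourierMul G u) := by
      simpa [Pi.add_def] using hd.add hu1
    rw [fourierC_sub hv hu1, fourierC_fourierMul hGc hGb hG_neg hu hv, Pi.sub_apply, ← sub_one_mul,
      norm_mul]
    norm_cast
  · rw [fourierC_of_not_integrable hd, Pi.zero_apply, norm_zero]
    positivity

end FourierMultiplier

lemma integrable_fourierC_of_HNorm_ne_top {s : ℝ} {u : ℝ → ℝ} (hs : 1 / 2 < s)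
    (hu : HNorm s u ≠ ⊤) : Integrable (fourierC u) := by
  have hweight : MemLp (fun ξ : ℝ => (1 + ξ ^ 2) ^ (-s / 2)) 2 := by
    refine (memLp_two_iff_integrable_sq (Measurable.aestronglyMeasurable (by fun_prop))).2 ?_
    refine (integrable_rpow_neg_one_add_norm_sq (E := ℝ) (r := 2 * s) (by simp; linarith)).congr
      (.of_forall fun ξ => ?_)
    dsimp only
    rw [Real.norm_eq_abs, sq_abs, ← Real.rpow_mul_natCast (by positivity)]
    ring_nf
  have hweighted : MemLp (fun ξ => (1 + ξ ^ 2) ^ (s / 2) * ‖fourierC u ξ‖) 2 :=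
    ⟨((by fun_prop : Measurable fun ξ : ℝ => (1 + ξ ^ 2) ^ (s / 2)).mul
      (continuous_fourierC u).norm.measurable).aestronglyMeasurable, hu.lt_top⟩
  rw [← integrable_norm_iff (continuous_fourierC u).aestronglyMeasurable]
  refine (hweight.integrable_mul hweighted).congr (.of_forall fun ξ => ?_)
  rw [Pi.mul_apply, ← mul_assoc, ← Real.rpow_add (by positivity), neg_div, neg_add_cancel,
    Real.rpow_zero, one_mul]

lemma HNorm_le_of_norm_fourierC_le {α β c : ℝ} {u v : ℝ → ℝ} (hc : 0 ≤ c)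
    (h : ∀ ξ, ‖fourierC v ξ‖ ≤ c * (1 + ξ ^ 2) ^ (β / 2) * ‖fourierC u ξ‖) :
    HNorm α v ≤ ENNReal.ofReal c * HNorm (α + β) u := by
  rw [HNorm, HNorm, ← Real.enorm_eq_ofReal hc, ← eLpNorm_const_smul]
  refine eLpNorm_mono fun ξ => ?_
  have hweight : (1 + ξ ^ 2) ^ ((α + β) / 2) = (1 + ξ ^ 2) ^ (α / 2) * (1 + ξ ^ 2) ^ (β / 2) := by
    rw [add_div, Real.rpow_add (by positivity)]
  rw [Pi.smul_apply, smul_eq_mul, Real.norm_of_nonneg (by positivity),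
    Real.norm_of_nonneg (mul_nonneg hc (by positivity)), hweight]
  calc (1 + ξ ^ 2) ^ (α / 2) * ‖fourierC v ξ‖
      ≤ (1 + ξ ^ 2) ^ (α / 2) * (c * (1 + ξ ^ 2) ^ (β / 2) * ‖fourierC u ξ‖) := by
        gcongr
        exact h ξ
    _ = c * ((1 + ξ ^ 2) ^ (α / 2) * (1 + ξ ^ 2) ^ (β / 2) * ‖fourierC u ξ‖) := by ring

theorem statement2_general (μmax : ℝ) :
    ∃ C : ℝ, 0 < C ∧
      ∀ μ ∈ Set.Icc (0:ℝ) μmax, ∀ α : ℝ, 0 ≤ α → ∀ u : ℝ → ℝ,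
        HNorm (α + 2) u ≠ ⊤ →
        HNorm α (fun x => fourierMul (Fsymb μ) u x - u x)
          ≤ ENNReal.ofReal (C * μ) * HNorm (α + 2) u := by
  refine ⟨1, one_pos, ?_⟩
  rintro μ ⟨hμ, -⟩ α hα u hu
  have hû : Integrable (fourierC u) := integrable_fourierC_of_HNorm_ne_top (by linarith) hu
  rw [one_mul]
  refine HNorm_le_of_norm_fourierC_le hμ fun ξ => ?_
  calc ‖fourierC (fun x => fourierMul (Fsymb μ) u x - u x) ξ‖
      ≤ |Fsymb μ ξ - 1| * ‖fourierC u ξ‖ :=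
        norm_fourierC_fourierMul_sub_le (continuous_Fsymb hμ) (abs_Fsymb_le_one μ)
          (Fsymb_neg μ) hû ξ
    _ ≤ μ * (1 + ξ ^ 2) ^ ((2 : ℝ) / 2) * ‖fourierC u ξ‖ := by
        rw [div_self two_ne_zero, Real.rpow_one]
        gcongr
        nlinarith [abs_Fsymb_sub_one_le hμ ξ]

theorem statement2 (μmax : ℝ) (hμmax : 0 < μmax) :
    ∃ C : ℝ, 0 < C ∧
      ∀ μ ∈ Set.Icc (0:ℝ) μmax, ∀ α : ℝ, 0 ≤ α → ∀ u : ℝ → ℝ,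
        HNorm (α + 2) u ≠ ⊤ →
        HNorm α (fun x => fourierMul (Fsymb μ) u x - u x)
          ≤ ENNReal.ofReal (C * μ) * HNorm (α + 2) u :=
  statement2_general μmax
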